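/- Let u_T : ℝⁿ → ℝ be Lipschitz and set u_T^* := S_T^+(S_T^- u_T). Then u_T^* is a viscosity supersolution of the obstacle problem min{ v − u_T, −λₙ[D²v − [H_pp(Dv)]⁻¹/T] } = 0 on ℝⁿ; that is, for every C² function φ : ℝⁿ → ℝ and every x0 that is a local minimum of u_T^* − φ with u_T^*(x0) = φ(x0), one has φ(x0) ≥ u_T(x0) and D²φ(x0)(p, p) ≤ (1/T)·⟨[H_pp(∇φ(x0))]⁻¹ p, p⟩ for all p ∈ ℝⁿ. -/

import Mathlib

/-!
Write `u* = S⁺ w` with `w = S⁻ u_T`. Taking `y = x` in both operators gives `u_T ≤ u*`.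

For the second-order condition, the infimum defining `u*(x₀)` is attained at some `y*`, and the
supremum defining `L(q*)`, `q* = (x₀ - y*)/T`, at some `p*`, so that `∇H(p*) = q*`. Put
`A = H_pp(p*)`. For every `θ < 1`, `L(q* + s) ≤ L(q*) + ⟨p*, s⟩ + ⟨A⁻¹ s, s⟩/(2θ)` for small `s`:
by Fenchel's inequality for quadratic forms it suffices that the excess
`H(p* + r) - H(p*) - ⟨q*, r⟩` dominate `(θ/2)⟨A r, r⟩` near `0`, which follows from continuity of
the Hessian; far from `0` the excess grows linearly by convexity and beats `⟨s, r⟩`. Using `y*`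
as a competitor at `x₀ + h` gives `u*(x₀ + h) ≤ u*(x₀) + ⟨p*, h⟩ + ⟨A⁻¹ h, h⟩/(2θT)`. A test
function touching `u*` from below inherits this bound, hence `∇φ(x₀) = p*` and
`θ D²φ(x₀) ≤ A⁻¹/T`; let `θ → 1`.
-/

open scoped RealInnerProductSpace
open Filter

noncomputable section

/-- `n`-dimensional Euclidean space. -/
abbrev Euc (n : ℕ) := EuclideanSpace ℝ (Fin n)

/-- A real-valued function on `ℝⁿ` is Lipschitz (with some constant). -/
def IsLip {n : ℕ} (f : Euc n → ℝ) : Prop := ∃ K : NNReal, LipschitzWith K f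

/-- The Legendre transform `L(q) = sup_p (⟨q,p⟫ - H(p))`. -/
def legendre {n : ℕ} (H : Euc n → ℝ) (q : Euc n) : ℝ :=
  ⨆ p : Euc n, (⟪q, p⟫ - H p)

/-- The forward Hopf–Lax operator `(S_T^+ g)(x) = inf_y [g(y) + T·L((x-y)/T)]`. -/
def Splus {n : ℕ} (T : ℝ) (L : Euc n → ℝ) (g : Euc n → ℝ) (x : Euc n) : ℝ :=
  ⨅ y : Euc n, (g y + T * L (T⁻¹ • (x - y)))

/-- The backward operator `(S_T^- g)(x) = sup_y [g(y) - T·L((y-x)/T)]`. -/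
def Sminus {n : ℕ} (T : ℝ) (L : Euc n → ℝ) (g : Euc n → ℝ) (x : Euc n) : ℝ :=
  ⨆ y : Euc n, (g y - T * L (T⁻¹ • (y - x)))

/-- The Hessian of `H` is positive definite at every point. -/
def PosDefHessian {n : ℕ} (H : Euc n → ℝ) : Prop :=
  ∀ p v : Euc n, v ≠ 0 → 0 < iteratedFDeriv ℝ 2 H p ![v, v]

/-- `H` is superlinear: `H(p)/‖p‖ → +∞` as `‖p‖ → +∞`. -/
def Superlinear {n : ℕ} (H : Euc n → ℝ) : Prop :=
  Tendsto (fun p : Euc n => H p / ‖p‖) (cocompact (Euc n)) atTop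

/-- The Hessian of `H` at `q`, as a continuous linear operator: the derivative of the
gradient map `∇H` at `q`. -/
def hessOp {n : ℕ} (H : Euc n → ℝ) (q : Euc n) : Euc n →L[ℝ] Euc n :=
  fderiv ℝ (gradient H) q

open Filter Set Topology

section Calculus
variable {E F : Type*} [NormedAddCommGroup E] [NormedSpace ℝ E] [NormedAddCommGroup F]
  [NormedSpace ℝ F]

lemma hasDerivAt_comp_add_smul {f : E → F} {x v : E} {t : ℝ}
    (hf : DifferentiableAt ℝ f (x + t • v)) :
    HasDerivAt (fun s : ℝ => f (x + s • v)) (fderiv ℝ f (x + t • v) v) t := by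
  have hline : HasDerivAt (fun s : ℝ => x + s • v) v t := by
    simpa using ((hasDerivAt_id t).smul_const v).const_add x
  exact hf.hasFDerivAt.comp_hasDerivAt t hline

lemma hasDerivAt_fderiv_comp_add_smul {f : E → F} (hf : ContDiff ℝ 2 f) (x v : E) (t : ℝ) :
    HasDerivAt (fun s : ℝ => fderiv ℝ f (x + s • v) v)
      (fderiv ℝ (fderiv ℝ f) (x + t • v) v v) t := by
  have hdiff : Differentiable ℝ (fderiv ℝ f) :=
    (hf.fderiv_right (m := 1) le_rfl).differentiable one_ne_zero
  simpa using (hasDerivAt_comp_add_smul (hdiff _)).clm_apply (hasDerivAt_const t v)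

end Calculus

lemma add_add_half_le_of_le_deriv {g g' g'' : ℝ → ℝ} {c : ℝ}
    (hg : ∀ t, HasDerivAt g (g' t) t) (hg' : ∀ t, HasDerivAt g' (g'' t) t)
    (hc : ∀ t ∈ Icc (0 : ℝ) 1, c ≤ g'' t) :
    g 0 + g' 0 + c / 2 ≤ g 1 := by
  have hslope : ∀ t ∈ Icc (0 : ℝ) 1, g' 0 + c * t ≤ g' t := by
    intro t ht
    have := (convex_Icc (0 : ℝ) 1).mul_sub_le_image_sub_of_le_deriv
      (fun s _ => (hg' s).continuousAt.continuousWithinAt)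
      (fun s _ => (hg' s).differentiableAt.differentiableWithinAt)
      (fun s hs => (hg' s).deriv ▸ hc s (interior_subset hs))
      0 (left_mem_Icc.2 zero_le_one) t ht ht.1
    linarith
  set m : ℝ → ℝ := fun t => g t - g' 0 * t - c / 2 * t ^ 2
  have hm : ∀ t, HasDerivAt m (g' t - g' 0 - c * t) t := fun t =>
    (((hg t).sub ((hasDerivAt_id t).const_mul (g' 0))).sub
      ((hasDerivAt_pow 2 t).const_mul (c / 2))).congr_deriv (by norm_num; ring)
  have := (convex_Icc (0 : ℝ) 1).mul_sub_le_image_sub_of_le_deriv (C := 0)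
    (fun s _ => (hm s).continuousAt.continuousWithinAt)
    (fun s _ => (hm s).differentiableAt.differentiableWithinAt)
    (fun s hs => by rw [(hm s).deriv]; linarith [hslope s (interior_subset hs)])
    0 (left_mem_Icc.2 zero_le_one) 1 (right_mem_Icc.2 zero_le_one) zero_le_one
  simp only [m] at this
  linarith

lemma IsLocalMax.nonpos_of_hasDerivAt_deriv {f f' : ℝ → ℝ} {x d : ℝ} (h : IsLocalMax f x)
    (hf : ∀ t, HasDerivAt f (f' t) t) (hf' : HasDerivAt f' d x) : d ≤ 0 := by
  have hderiv : deriv f = f' := funext fun t => (hf t).deriv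
  by_contra! hd
  -- By the second-derivative test `x` is also a local minimum, so `f` is locally constant.
  have hmin : IsLocalMin f x := isLocalMin_of_deriv_deriv_pos (by rwa [hderiv, hf'.deriv])
    (by rw [hderiv]; exact h.hasDerivAt_eq_zero (hf x)) (hf x).continuousAt
  have hconst : f =ᶠ[𝓝 x] fun _ => f x :=
    (hmin.and h).mono fun y hy => le_antisymm hy.2 hy.1
  have := hconst.deriv.deriv_eq
  simp only [hderiv, hf'.deriv, deriv_const', deriv_const] at this
  exact hd.ne' this

section QuadraticForm
variable {E : Type*} [NormedAddCommGroup E] [InnerProductSpace ℝ E]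

lemma exists_pos_mul_sq_norm_le_inner [FiniteDimensional ℝ E] (A : E →L[ℝ] E)
    (hA : ∀ v, v ≠ 0 → 0 < ⟪A v, v⟫) : ∃ c > 0, ∀ v, c * ‖v‖ ^ 2 ≤ ⟪A v, v⟫ := by
  rcases subsingleton_or_nontrivial E with hE | hE
  · exact ⟨1, one_pos, fun v => by simp [Subsingleton.elim v 0]⟩
  obtain ⟨v₀, hv₀, hmin⟩ := (isCompact_sphere (0 : E) 1).exists_isMinOn
    (NormedSpace.sphere_nonempty.2 zero_le_one)
    (A.continuous.inner continuous_id : Continuous fun v => ⟪A v, v⟫).continuousOn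
  have hv₀' : ‖v₀‖ = 1 := by simpa using hv₀
  refine ⟨⟪A v₀, v₀⟫, hA v₀ (norm_ne_zero_iff.1 (by simp [hv₀'])), fun v => ?_⟩
  rcases eq_or_ne v 0 with rfl | hv
  · simp
  have hnv : 0 < ‖v‖ := norm_pos_iff.2 hv
  have hunit : ⟪A v₀, v₀⟫ ≤ ⟪A (‖v‖⁻¹ • v), ‖v‖⁻¹ • v⟫ := hmin (by simp [norm_smul, hnv.ne'])
  simp only [map_smul, real_inner_smul_left, real_inner_smul_right] at hunit
  calc ⟪A v₀, v₀⟫ * ‖v‖ ^ 2 ≤ ‖v‖⁻¹ * (‖v‖⁻¹ * ⟪A v, v⟫) * ‖v‖ ^ 2 := by gcongr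
    _ = ⟪A v, v⟫ := by field_simp

lemma isUnit_of_mul_sq_norm_le_inner [FiniteDimensional ℝ E] {A : E →L[ℝ] E} {c : ℝ}
    (hc : 0 < c) (hA : ∀ v, c * ‖v‖ ^ 2 ≤ ⟪A v, v⟫) : IsUnit A := by
  have hinj : Function.Injective A := by
    refine (injective_iff_map_eq_zero A).2 fun v hv => ?_
    have := hA v
    rw [hv, inner_zero_left] at this
    exact norm_eq_zero.1 (pow_eq_zero_iff two_ne_zero |>.1
      (le_antisymm (nonpos_of_mul_nonpos_right this hc) (sq_nonneg _)))
  exact A.isUnit_iff_bijective.2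
    ⟨hinj, LinearMap.injective_iff_surjective (f := (A : E →ₗ[ℝ] E)).1 hinj⟩

lemma inner_sub_mul_inner_le {A : E →L[ℝ] E} (hsymm : (A : E →ₗ[ℝ] E).IsSymmetric)
    (hpos : ∀ v, 0 ≤ ⟪A v, v⟫) (hunit : IsUnit A) {θ : ℝ} (hθ : 0 < θ) (s r : E) :
    ⟪s, r⟫ - θ / 2 * ⟪A r, r⟫ ≤ (2 * θ)⁻¹ * ⟪Ring.inverse A s, s⟫ := by
  set i := Ring.inverse A s
  have hi : A i = s := by
    simpa using DFunLike.congr_fun (Ring.mul_inverse_cancel A hunit) s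
  -- Expand `0 ≤ ⟪A (θ • r - i), θ • r - i⟫`.
  have h := hpos (θ • r - i)
  have hri : ⟪A r, i⟫ = ⟪r, s⟫ := by rw [← hi]; exact hsymm r i
  simp only [map_sub, map_smul, inner_sub_left, inner_sub_right, real_inner_smul_left,
    real_inner_smul_right, hi, hri, real_inner_comm s r] at h
  rw [le_inv_mul_iff₀ (by positivity)]
  nlinarith [real_inner_comm s i]

end QuadraticForm

section Hessian
variable {n : ℕ} {H : Euc n → ℝ}

lemma inner_hessOp_apply (z v w : Euc n) :
    ⟪hessOp H z v, w⟫ = fderiv ℝ (fderiv ℝ H) z v w := by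
  have hgrad : gradient H = (InnerProductSpace.toDual ℝ (Euc n)).symm ∘ fderiv ℝ H := rfl
  rw [hessOp, hgrad, LinearIsometryEquiv.comp_fderiv]
  exact InnerProductSpace.toDual_symm_apply

lemma iteratedFDeriv_two_eq_inner_hessOp (z v : Euc n) :
    iteratedFDeriv ℝ 2 H z ![v, v] = ⟪hessOp H z v, v⟫ := by
  simp [iteratedFDeriv_two_apply, inner_hessOp_apply]

lemma hessOp_isSymmetric (hH : ContDiff ℝ 2 H) (z : Euc n) :
    (hessOp H z : Euc n →ₗ[ℝ] Euc n).IsSymmetric := fun v w => by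
  rw [ContinuousLinearMap.coe_coe, real_inner_comm _ v, inner_hessOp_apply,
    inner_hessOp_apply]
  exact (hH.contDiffAt.isSymmSndFDerivAt (by simp)).eq v w

lemma continuous_hessOp (hH : ContDiff ℝ 2 H) : Continuous (hessOp H) := by
  have hgrad : ContDiff ℝ 1 (gradient H) :=
    (InnerProductSpace.toDual ℝ (Euc n)).symm.contDiff.comp (hH.fderiv_right (m := 1) le_rfl)
  exact hgrad.continuous_fderiv one_ne_zero

lemma PosDefHessian.inner_hessOp_self_pos (hpd : PosDefHessian H) (z : Euc n) {v : Euc n}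
    (hv : v ≠ 0) : 0 < ⟪hessOp H z v, v⟫ :=
  iteratedFDeriv_two_eq_inner_hessOp z v ▸ hpd z v hv

lemma PosDefHessian.inner_hessOp_self_nonneg (hpd : PosDefHessian H) (z v : Euc n) :
    0 ≤ ⟪hessOp H z v, v⟫ := by
  rcases eq_or_ne v 0 with rfl | hv
  · simp
  · exact (hpd.inner_hessOp_self_pos z hv).le

lemma add_fderiv_add_half_le (hH : ContDiff ℝ 2 H) {x r : Euc n} {c : ℝ}
    (hc : ∀ t ∈ Icc (0 : ℝ) 1, c ≤ ⟪hessOp H (x + t • r) r, r⟫) :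
    H x + fderiv ℝ H x r + c / 2 ≤ H (x + r) := by
  have := add_add_half_le_of_le_deriv
    (fun t => hasDerivAt_comp_add_smul ((hH.differentiable two_ne_zero) (x + t • r)))
    (hasDerivAt_fderiv_comp_add_smul hH x r)
    (fun t ht => (inner_hessOp_apply _ r r) ▸ hc t ht)
  simpa using this

lemma add_fderiv_le (hH : ContDiff ℝ 2 H) (hpd : PosDefHessian H) (x r : Euc n) :
    H x + fderiv ℝ H x r ≤ H (x + r) := by
  simpa using add_fderiv_add_half_le hH fun t _ => hpd.inner_hessOp_self_nonneg (x + t • r) r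

lemma mul_sub_le_sub_of_one_le (hH : ContDiff ℝ 2 H) (hpd : PosDefHessian H) (x u : Euc n)
    {t : ℝ} (ht : 1 ≤ t) : t * (H (x + u) - H x) ≤ H (x + t • u) - H x := by
  -- Two tangent-line inequalities at `x + u`, towards `x` and towards `x + t • u`.
  have hback := add_fderiv_le hH hpd (x + u) (-u)
  have hfwd := add_fderiv_le hH hpd (x + u) ((t - 1) • u)
  simp only [map_neg, map_smul, smul_eq_mul, add_neg_cancel_right] at hback hfwd
  rw [show x + u + (t - 1) • u = x + t • u by module] at hfwd
  nlinarith

lemma div_mul_le_sub_sub_inner_of_le_norm (hH : ContDiff ℝ 2 H) (hpd : PosDefHessian H)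
    (p q : Euc n) {ρ m : ℝ} (hρ : 0 < ρ) (hm : ∀ u, ‖u‖ = ρ → m ≤ H (p + u) - H p - ⟪q, u⟫)
    {r : Euc n} (hr : ρ ≤ ‖r‖) : ‖r‖ / ρ * m ≤ H (p + r) - H p - ⟪q, r⟫ := by
  have hr0 : 0 < ‖r‖ := hρ.trans_le hr
  set u := (ρ / ‖r‖) • r
  have hu : ‖u‖ = ρ := by
    rw [norm_smul, Real.norm_of_nonneg (by positivity), div_mul_cancel₀ _ hr0.ne']
  have hru : (‖r‖ / ρ) • u = r := by
    rw [smul_smul, div_mul_div_comm, mul_comm ‖r‖, div_self (mul_pos hρ hr0).ne', one_smul]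
  have hray := mul_sub_le_sub_of_one_le hH hpd p u ((one_le_div hρ).2 hr)
  rw [hru] at hray
  have hqr : ⟪q, r⟫ = ‖r‖ / ρ * ⟪q, u⟫ := by rw [← real_inner_smul_right, hru]
  have := mul_le_mul_of_nonneg_left (hm u hu) (div_nonneg hr0.le hρ.le)
  rw [hqr]
  linarith

lemma exists_add_fderiv_add_mul_inner_le (hH : ContDiff ℝ 2 H) {x : Euc n} {θ c : ℝ}
    (hθ : θ < 1) (hc : 0 < c) (hcoer : ∀ v, c * ‖v‖ ^ 2 ≤ ⟪hessOp H x v, v⟫) :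
    ∃ ρ > 0, ∀ r, ‖r‖ ≤ ρ → H x + fderiv ℝ H x r + θ / 2 * ⟪hessOp H x r, r⟫ ≤ H (x + r) := by
  obtain ⟨ρ, hρ, hclose⟩ := Metric.continuousAt_iff.1 (continuous_hessOp hH).continuousAt
    ((1 - θ) * c) (by nlinarith)
  refine ⟨ρ / 2, half_pos hρ, fun r hr => ?_⟩
  have := add_fderiv_add_half_le hH (x := x) (r := r) (c := θ * ⟪hessOp H x r, r⟫) fun t ht => by
    have hdist : dist (x + t • r) x < ρ := by
      rw [dist_eq_norm, add_sub_cancel_left, norm_smul, Real.norm_of_nonneg ht.1]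
      nlinarith [norm_nonneg r, ht.2]
    have hdiff : ⟪(hessOp H x - hessOp H (x + t • r)) r, r⟫ ≤ (1 - θ) * c * ‖r‖ ^ 2 :=
      calc _ ≤ ‖hessOp H x - hessOp H (x + t • r)‖ * ‖r‖ * ‖r‖ :=
            (real_inner_le_norm _ _).trans (by gcongr; exact ContinuousLinearMap.le_opNorm _ _)
        _ ≤ (1 - θ) * c * ‖r‖ * ‖r‖ := by
            gcongr; rw [← dist_eq_norm, dist_comm]; exact (hclose hdist).le
        _ = (1 - θ) * c * ‖r‖ ^ 2 := by ring
    rw [sub_apply, inner_sub_left] at hdiff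
    nlinarith [hcoer r]
  linarith

end Hessian

lemma fderiv_apply_eq_inner_of_forall_le {E : Type*} [NormedAddCommGroup E]
    [InnerProductSpace ℝ E] {f : E → ℝ} {q p : E} (hf : DifferentiableAt ℝ f p)
    (hp : ∀ p', ⟪q, p'⟫ - f p' ≤ ⟪q, p⟫ - f p) (r : E) : fderiv ℝ f p r = ⟪q, r⟫ := by
  have hmax : IsLocalMax (fun p' => ⟪q, p'⟫ - f p') p := Eventually.of_forall hp
  have := DFunLike.congr_fun
    (hmax.hasFDerivAt_eq_zero ((innerSL ℝ q).hasFDerivAt.sub hf.hasFDerivAt)) r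
  rw [sub_apply, zero_apply, innerSL_apply_apply] at this
  linarith

section Legendre
variable {n : ℕ} {H : Euc n → ℝ}

lemma tendsto_inner_sub_cocompact_atBot (hsl : Superlinear H) (q : Euc n) :
    Tendsto (fun p => ⟪q, p⟫ - H p) (cocompact (Euc n)) atBot := by
  refine tendsto_atBot.2 fun b => ?_
  filter_upwards [hsl.eventually (eventually_ge_atTop (‖q‖ + |b| + 1)),
    tendsto_norm_cocompact_atTop.eventually (eventually_ge_atTop 1)] with p hp hp1
  rw [le_div_iff₀ (by linarith)] at hp
  nlinarith [real_inner_le_norm q p, neg_abs_le b, mul_nonneg (abs_nonneg b) (sub_nonneg.2 hp1)]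

lemma exists_forall_inner_sub_le (hc : Continuous H) (hsl : Superlinear H) (q : Euc n) :
    ∃ p, ∀ p', ⟪q, p'⟫ - H p' ≤ ⟪q, p⟫ - H p :=
  ((continuous_const.inner continuous_id).sub hc).exists_forall_ge
    (tendsto_inner_sub_cocompact_atBot hsl q)

lemma inner_sub_le_legendre (hc : Continuous H) (hsl : Superlinear H) (q p : Euc n) :
    ⟪q, p⟫ - H p ≤ legendre H q := by
  obtain ⟨_, hmax⟩ := exists_forall_inner_sub_le hc hsl q
  exact le_ciSup ⟨_, forall_mem_range.2 hmax⟩ p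

lemma legendre_eq_of_forall_le (hc : Continuous H) (hsl : Superlinear H) {q p : Euc n}
    (hp : ∀ p', ⟪q, p'⟫ - H p' ≤ ⟪q, p⟫ - H p) : legendre H q = ⟪q, p⟫ - H p :=
  le_antisymm (ciSup_le hp) (inner_sub_le_legendre hc hsl q p)

lemma exists_mul_norm_sub_le_legendre (hc : Continuous H) (hsl : Superlinear H) {a : ℝ}
    (ha : 0 ≤ a) : ∃ M, ∀ q, a * ‖q‖ - M ≤ legendre H q := by
  obtain ⟨M, hM⟩ := (isCompact_closedBall (0 : Euc n) a).bddAbove_image hc.continuousOn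
  refine ⟨M, fun q => ?_⟩
  have hp : ‖(a / ‖q‖) • q‖ ≤ a := by
    rw [norm_smul, Real.norm_of_nonneg (by positivity), div_mul_eq_mul_div]
    exact div_le_of_le_mul₀ (norm_nonneg q) ha (by nlinarith [norm_nonneg q])
  have := inner_sub_le_legendre hc hsl q ((a / ‖q‖) • q)
  have hq : a / ‖q‖ * ‖q‖ ^ 2 = a * ‖q‖ := by
    rcases eq_or_ne ‖q‖ 0 with h | h
    · simp [h]
    · field_simp
  rw [real_inner_smul_right, real_inner_self_eq_norm_sq, hq] at this
  linarith [hM ⟨_, by simpa using hp, rfl⟩]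

lemma exists_mul_norm_sub_le_mul_legendre (hc : Continuous H) (hsl : Superlinear H) {a T : ℝ}
    (ha : 0 ≤ a) (hT : 0 < T) : ∃ M, ∀ d, a * ‖d‖ - M ≤ T * legendre H (T⁻¹ • d) := by
  obtain ⟨M, hM⟩ := exists_mul_norm_sub_le_legendre hc hsl ha
  refine ⟨T * M, fun d => ?_⟩
  have := mul_le_mul_of_nonneg_left (hM (T⁻¹ • d)) hT.le
  rw [norm_smul, Real.norm_of_nonneg (inv_nonneg.2 hT.le)] at this
  calc a * ‖d‖ - T * M = T * (a * (T⁻¹ * ‖d‖) - M) := by field_simp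
    _ ≤ _ := this

lemma convexOn_legendre (hc : Continuous H) (hsl : Superlinear H) :
    ConvexOn ℝ univ (legendre H) := by
  refine ⟨convex_univ, fun q₁ _ q₂ _ a b ha hb hab => ciSup_le fun p => ?_⟩
  have h₁ := inner_sub_le_legendre hc hsl q₁ p
  have h₂ := inner_sub_le_legendre hc hsl q₂ p
  calc ⟪a • q₁ + b • q₂, p⟫ - H p = a * (⟪q₁, p⟫ - H p) + b * (⟪q₂, p⟫ - H p) := by
        rw [inner_add_left, real_inner_smul_left, real_inner_smul_left]
        linear_combination H p * hab
    _ ≤ a • legendre H q₁ + b • legendre H q₂ := by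
        simp only [smul_eq_mul]; gcongr

lemma continuous_legendre (hc : Continuous H) (hsl : Superlinear H) :
    Continuous (legendre H) :=
  continuousOn_univ.1 ((convexOn_legendre hc hsl).continuousOn isOpen_univ)

lemma legendre_add_le (hH : ContDiff ℝ 2 H) (hpd : PosDefHessian H) (hsl : Superlinear H)
    {q p : Euc n} (hp : ∀ p', ⟪q, p'⟫ - H p' ≤ ⟪q, p⟫ - H p) {θ : ℝ} (hθ : θ ∈ Ioo (0 : ℝ) 1) :
    ∃ δ > 0, ∀ s, ‖s‖ ≤ δ →
      legendre H (q + s) ≤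
        legendre H q + ⟪p, s⟫ + (2 * θ)⁻¹ * ⟪Ring.inverse (hessOp H p) s, s⟫ := by
  set A := hessOp H p
  obtain ⟨c, hc, hcoer⟩ := exists_pos_mul_sq_norm_le_inner A fun _ => hpd.inner_hessOp_self_pos p
  have hApos : ∀ v, 0 ≤ ⟪A v, v⟫ := hpd.inner_hessOp_self_nonneg p
  have hfench := inner_sub_mul_inner_le (hessOp_isSymmetric hH p) hApos
    (isUnit_of_mul_sq_norm_le_inner hc hcoer) hθ.1
  have hgrad := fderiv_apply_eq_inner_of_forall_le ((hH.differentiable two_ne_zero) p) hp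
  -- Near `p`, the excess `H (p + r) - H p - ⟪q, r⟫` dominates `θ/2 ⟪A r, r⟫` ...
  obtain ⟨ρ, hρ, hnear⟩ := exists_add_fderiv_add_mul_inner_le hH hθ.2 hc hcoer
  simp only [hgrad] at hnear
  -- ... and by convexity along rays it grows at least linearly beyond.
  have hfar : ∀ r, ρ ≤ ‖r‖ → θ * c * ρ / 2 * ‖r‖ ≤ H (p + r) - H p - ⟪q, r⟫ := by
    intro r hr
    have := div_mul_le_sub_sub_inner_of_le_norm hH hpd p q hρ (m := θ / 2 * (c * ρ ^ 2))
      (fun u hu => by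
        have := mul_le_mul_of_nonneg_left (hu ▸ hcoer u) (half_pos hθ.1).le
        linarith [hnear u hu.le]) hr
    calc θ * c * ρ / 2 * ‖r‖ = ‖r‖ / ρ * (θ / 2 * (c * ρ ^ 2)) := by field_simp
      _ ≤ _ := this
  refine ⟨θ * c * ρ / 2, by have := hθ.1; positivity, fun s hs => ciSup_le fun p' => ?_⟩
  obtain ⟨r, rfl⟩ : ∃ r, p' = p + r := ⟨p' - p, by abel⟩
  rw [legendre_eq_of_forall_le hH.continuous hsl hp]
  have hexcess : ⟪s, r⟫ - (H (p + r) - H p - ⟪q, r⟫) ≤ (2 * θ)⁻¹ * ⟪Ring.inverse A s, s⟫ := by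
    rcases le_or_gt ‖r‖ ρ with hr | hr
    · linarith [hnear r hr, hfench s r]
    · have := hfench s 0
      simp only [inner_zero_right, map_zero, mul_zero, sub_zero] at this
      nlinarith [real_inner_le_norm s r, hfar r hr.le, norm_nonneg r]
  calc ⟪q + s, p + r⟫ - H (p + r)
      = ⟪q, p⟫ - H p + ⟪p, s⟫ + (⟪s, r⟫ - (H (p + r) - H p - ⟪q, r⟫)) := by
        simp only [inner_add_left, inner_add_right, real_inner_comm s p]; ring
    _ ≤ _ := by linarith

end Legendre

lemma LipschitzWith.ciSup {α ι : Type*} [PseudoMetricSpace α] [Nonempty ι] {f : ι → α → ℝ}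
    {K : NNReal} (hf : ∀ i, LipschitzWith K (f i)) (hb : ∀ x, BddAbove (range fun i => f i x)) :
    LipschitzWith K fun x => ⨆ i, f i x :=
  LipschitzWith.of_le_add_mul K fun x y => ciSup_le fun i =>
    ((hf i).le_add_mul x y).trans (by gcongr; exact le_ciSup (hb y) i)

lemma sminus_eq_iSup_add {n : ℕ} (T : ℝ) (L u : Euc n → ℝ) (y : Euc n) :
    Sminus T L u y = ⨆ d, (u (y + d) - T * L (T⁻¹ • d)) := by
  rw [Sminus, ← (Equiv.addLeft y).iSup_comp]
  simp

section HopfLax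
variable {n : ℕ} {H : Euc n → ℝ} {T : ℝ} {K : NNReal} {u : Euc n → ℝ}

lemma bddAbove_range_sub_mul_legendre (hc : Continuous H) (hsl : Superlinear H) (hT : 0 < T)
    (hu : LipschitzWith K u) (y : Euc n) :
    BddAbove (range fun z => u z - T * legendre H (T⁻¹ • (z - y))) := by
  obtain ⟨M, hM⟩ := exists_mul_norm_sub_le_mul_legendre hc hsl K.coe_nonneg hT
  refine ⟨u y + M, forall_mem_range.2 fun z => ?_⟩
  have := hu.le_add_mul z y
  rw [dist_eq_norm] at this
  linarith [hM (z - y)]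

lemma le_sminus (hc : Continuous H) (hsl : Superlinear H) (hT : 0 < T)
    (hu : LipschitzWith K u) (z y : Euc n) :
    u z - T * legendre H (T⁻¹ • (z - y)) ≤ Sminus T (legendre H) u y :=
  le_ciSup (bddAbove_range_sub_mul_legendre hc hsl hT hu y) z

lemma le_splus_sminus (hc : Continuous H) (hsl : Superlinear H) (hT : 0 < T)
    (hu : LipschitzWith K u) (x : Euc n) :
    u x ≤ Splus T (legendre H) (Sminus T (legendre H) u) x :=
  le_ciInf fun y => by linarith [le_sminus hc hsl hT hu x y]

lemma splus_sminus_le (hc : Continuous H) (hsl : Superlinear H) (hT : 0 < T)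
    (hu : LipschitzWith K u) (x y : Euc n) :
    Splus T (legendre H) (Sminus T (legendre H) u) x ≤
      Sminus T (legendre H) u y + T * legendre H (T⁻¹ • (x - y)) :=
  ciInf_le ⟨u x, forall_mem_range.2 fun y => by linarith [le_sminus hc hsl hT hu x y]⟩ y

lemma lipschitzWith_sminus (hc : Continuous H) (hsl : Superlinear H) (hT : 0 < T)
    (hu : LipschitzWith K u) : LipschitzWith K (Sminus T (legendre H) u) := by
  simp_rw [funext (sminus_eq_iSup_add T (legendre H) u)]
  refine LipschitzWith.ciSup (fun d => LipschitzWith.of_le_add_mul K fun x y => ?_) fun y => ?_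
  · have := hu.le_add_mul (x + d) (y + d)
    rw [dist_add_right] at this
    linarith
  · have := bddAbove_range_sub_mul_legendre hc hsl hT hu y
    rw [← (Equiv.addLeft y).surjective.range_comp] at this
    simpa [Function.comp_def] using this

lemma exists_splus_sminus_eq (hc : Continuous H) (hsl : Superlinear H) (hT : 0 < T)
    (hu : LipschitzWith K u) (x : Euc n) :
    ∃ y, Splus T (legendre H) (Sminus T (legendre H) u) x =
      Sminus T (legendre H) u y + T * legendre H (T⁻¹ • (x - y)) := by
  set w := Sminus T (legendre H) u
  have hw := lipschitzWith_sminus hc hsl hT hu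
  obtain ⟨M, hM⟩ := exists_mul_norm_sub_le_mul_legendre hc hsl (a := K + 1) (by positivity) hT
  -- The Lipschitz decay of `w` is beaten by the growth of the Lagrangian term.
  have hcoercive : Tendsto (fun y => w y + T * legendre H (T⁻¹ • (x - y)))
      (cocompact (Euc n)) atTop := by
    refine tendsto_atTop_mono (fun y => ?_) (tendsto_atTop_add_const_left _
      (w x - M - ‖x‖) tendsto_norm_cocompact_atTop)
    have h₁ := hw.le_add_mul x y
    have h₂ := hM (x - y)
    rw [dist_eq_norm] at h₁
    nlinarith [norm_sub_norm_le y x, norm_sub_rev x y, norm_nonneg (x - y)]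
  obtain ⟨y, hy⟩ := (hw.continuous.add (continuous_const.mul
    ((continuous_legendre hc hsl).comp (by fun_prop)))).exists_forall_le hcoercive
  exact ⟨y, le_antisymm (ciInf_le ⟨_, forall_mem_range.2 hy⟩ y) (le_ciInf hy)⟩

lemma exists_splus_sminus_add_le (hH : ContDiff ℝ 2 H) (hpd : PosDefHessian H)
    (hsl : Superlinear H) (hT : 0 < T) (hu : LipschitzWith K u) (x : Euc n) :
    ∃ p, ∀ θ ∈ Ioo (0 : ℝ) 1, ∀ᶠ h in 𝓝 0,
      Splus T (legendre H) (Sminus T (legendre H) u) (x + h) ≤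
        Splus T (legendre H) (Sminus T (legendre H) u) x +
          (⟪p, h⟫ + (2 * θ * T)⁻¹ * ⟪Ring.inverse (hessOp H p) h, h⟫) := by
  have hc := hH.continuous
  obtain ⟨y, hy⟩ := exists_splus_sminus_eq hc hsl hT hu x
  set q := T⁻¹ • (x - y)
  obtain ⟨p, hp⟩ := exists_forall_inner_sub_le hc hsl q
  refine ⟨p, fun θ hθ => ?_⟩
  obtain ⟨δ, hδ, hL⟩ := legendre_add_le hH hpd hsl hp hθ
  filter_upwards [Metric.closedBall_mem_nhds (0 : Euc n) (mul_pos hT hδ)] with h hh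
  have hs : ‖T⁻¹ • h‖ ≤ δ := by
    rw [mem_closedBall_zero_iff] at hh
    rw [norm_smul, Real.norm_of_nonneg (inv_nonneg.2 hT.le), inv_mul_le_iff₀ hT]
    exact hh
  calc _ ≤ Sminus T (legendre H) u y + T * legendre H (q + T⁻¹ • h) := by
        rw [show q + T⁻¹ • h = T⁻¹ • (x + h - y) by simp only [q]; module]
        exact splus_sminus_le hc hsl hT hu (x + h) y
    _ ≤ Sminus T (legendre H) u y + T * (legendre H q + ⟪p, T⁻¹ • h⟫ +
          (2 * θ)⁻¹ * ⟪Ring.inverse (hessOp H p) (T⁻¹ • h), T⁻¹ • h⟫) := by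
        gcongr; exact hL _ hs
    _ = _ := by
        rw [hy, map_smul, real_inner_smul_left, real_inner_smul_right, real_inner_smul_right]
        field_simp
        ring

end HopfLax

lemma gradient_eq_and_iteratedFDeriv_two_le {E : Type*} [NormedAddCommGroup E]
    [InnerProductSpace ℝ E] [CompleteSpace E] {φ : E → ℝ} (hφ : ContDiff ℝ 2 φ) {x p : E}
    {c : ℝ} {B : E →L[ℝ] E} (hle : ∀ᶠ h in 𝓝 0, φ (x + h) ≤ φ x + (⟪p, h⟫ + c * ⟪B h, h⟫)) :
    gradient φ x = p ∧ ∀ v, iteratedFDeriv ℝ 2 φ x ![v, v] ≤ 2 * c * ⟪B v, v⟫ := by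
  set g : E → ℝ → ℝ := fun v t => φ (x + t • v) - t * ⟪p, v⟫ - t ^ 2 * (c * ⟪B v, v⟫)
  have hmax : ∀ v, IsLocalMax (g v) 0 := fun v => by
    have hline : Tendsto (fun t : ℝ => t • v) (𝓝 0) (𝓝 0) := by
      simpa using (continuous_id.smul continuous_const).tendsto (0 : ℝ) (f := fun t : ℝ => t • v)
    filter_upwards [hline.eventually hle] with t ht
    simp only [map_smul, real_inner_smul_left, real_inner_smul_right] at ht
    simp only [g, zero_smul, add_zero, zero_mul, sub_zero, ne_eq, OfNat.ofNat_ne_zero,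
      not_false_eq_true, zero_pow]
    nlinarith
  have hg : ∀ v t,
      HasDerivAt (g v) (fderiv ℝ φ (x + t • v) v - ⟪p, v⟫ - 2 * t * (c * ⟪B v, v⟫)) t :=
    fun v t => (((hasDerivAt_comp_add_smul ((hφ.differentiable two_ne_zero) _)).sub
      ((hasDerivAt_id t).mul_const ⟪p, v⟫)).sub
        ((hasDerivAt_pow 2 t).mul_const (c * ⟪B v, v⟫))).congr_deriv (by norm_num)
  have hfderiv : fderiv ℝ φ x = InnerProductSpace.toDual ℝ E p := by
    ext v
    have := (hmax v).hasDerivAt_eq_zero (hg v 0)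
    simp only [zero_smul, add_zero, mul_zero, zero_mul, sub_zero] at this
    simp [sub_eq_zero.1 this]
  refine ⟨by rw [gradient, hfderiv, LinearIsometryEquiv.symm_apply_apply], fun v => ?_⟩
  have hsecond := (hmax v).nonpos_of_hasDerivAt_deriv (hg v)
    (((hasDerivAt_fderiv_comp_add_smul hφ x v 0).sub_const ⟪p, v⟫).sub
      (((hasDerivAt_id 0).const_mul 2).mul_const (c * ⟪B v, v⟫)))
  simp only [zero_smul, add_zero, mul_one] at hsecond
  rw [iteratedFDeriv_two_apply]
  simpa [sub_nonpos, mul_assoc] using hsecond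

lemma IsLocalMin.eventually_add_le {E : Type*} [NormedAddCommGroup E] {ψ φ Q : E → ℝ} {x : E}
    (hmin : IsLocalMin (fun y => ψ y - φ y) x) (hψ : ∀ᶠ h in 𝓝 0, ψ (x + h) ≤ ψ x + Q h) :
    ∀ᶠ h in 𝓝 0, φ (x + h) ≤ φ x + Q h := by
  have hshift : Tendsto (fun h => x + h) (𝓝 0) (𝓝 x) := by
    simpa using (continuous_const_add x).tendsto 0
  filter_upwards [hψ, hshift.eventually hmin] with h h₁ h₂
  linarith

lemma le_of_forall_mem_Ioo_mul_le {a b : ℝ} (h : ∀ θ ∈ Ioo (0 : ℝ) 1, θ * a ≤ b) : a ≤ b := by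
  have hlim : Tendsto (fun θ : ℝ => θ * a) (𝓝[<] 1) (𝓝 a) := by
    simpa using ((continuous_mul_const a).tendsto 1).mono_left nhdsWithin_le_nhds
  exact le_of_tendsto hlim (eventually_of_mem (Ioo_mem_nhdsLT zero_lt_one) h)

theorem semiconcave_envelope_viscosity_supersolution_general
    {n : ℕ} (T : ℝ) (hT : 0 < T)
    (H : Euc n → ℝ) (hH : ContDiff ℝ 2 H)
    (hHconv : PosDefHessian H) (hHsuper : Superlinear H)
    (uT : Euc n → ℝ) (huT : IsLip uT) :
    ∀ φ : Euc n → ℝ, ContDiff ℝ 2 φ → ∀ x0 : Euc n,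
      IsLocalMin
        (fun x => Splus T (legendre H) (Sminus T (legendre H) uT) x - φ x) x0 →
      Splus T (legendre H) (Sminus T (legendre H) uT) x0 = φ x0 →
      uT x0 ≤ φ x0 ∧
        ∀ p : Euc n, iteratedFDeriv ℝ 2 φ x0 ![p, p] ≤
          (1 / T) * ⟪Ring.inverse (hessOp H (gradient φ x0)) p, p⟫ := by
  intro φ hφ x0 hmin heq
  obtain ⟨K, hu⟩ := huT
  refine ⟨heq ▸ le_splus_sminus hH.continuous hHsuper hT hu x0, fun v => ?_⟩
  obtain ⟨p, hp⟩ := exists_splus_sminus_add_le hH hHconv hHsuper hT hu x0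
  have htouch := fun θ hθ =>
    gradient_eq_and_iteratedFDeriv_two_le hφ (hmin.eventually_add_le (hp θ hθ))
  rw [(htouch (1 / 2) ⟨by norm_num, by norm_num⟩).1]
  refine le_of_forall_mem_Ioo_mul_le fun θ hθ => ?_
  calc θ * iteratedFDeriv ℝ 2 φ x0 ![v, v]
      ≤ θ * (2 * (2 * θ * T)⁻¹ * ⟪Ring.inverse (hessOp H p) v, v⟫) :=
        mul_le_mul_of_nonneg_left ((htouch θ hθ).2 v) hθ.1.le
    _ = _ := by field_simp [hθ.1.ne']

/-- `u_T^* := S_T^+(S_T^- u_T)` is a viscosity supersolution of the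
obstacle problem `min{v - u_T, -λₙ[D²v - [H_pp(Dv)]⁻¹/T]} = 0`: for every `C²` test
function `φ` touching `u_T^*` from below at a local minimum `x0` of `u_T^* - φ`, one has
`φ(x0) ≥ u_T(x0)` and `D²φ(x0)(p,p) ≤ (1/T)·⟨[H_pp(∇φ(x0))]⁻¹ p, p⟩` for all `p`. -/
theorem semiconcave_envelope_viscosity_supersolution
    {n : ℕ} (hn : 0 < n) (T : ℝ) (hT : 0 < T)
    (H : Euc n → ℝ) (hH : ContDiff ℝ 2 H)
    (hHconv : PosDefHessian H) (hHsuper : Superlinear H)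
    (uT : Euc n → ℝ) (huT : IsLip uT) :
    ∀ φ : Euc n → ℝ, ContDiff ℝ 2 φ → ∀ x0 : Euc n,
      IsLocalMin
        (fun x => Splus T (legendre H) (Sminus T (legendre H) uT) x - φ x) x0 →
      Splus T (legendre H) (Sminus T (legendre H) uT) x0 = φ x0 →
      uT x0 ≤ φ x0 ∧
        ∀ p : Euc n, iteratedFDeriv ℝ 2 φ x0 ![p, p] ≤
          (1 / T) * ⟪Ring.inverse (hessOp H (gradient φ x0)) p, p⟫ :=
  semiconcave_envelope_viscosity_supersolution_general T hT H hH hHconv hHsuper uT huT
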